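/- arXiv:2505.20652 — 6 statements merged into one kernel-verified Lean document; each statement's English description precedes it below -/
import Mathlib

section
/- The complete graph K_{2n+1} can be decomposed into 2n+1 pairwise edge-disjoint maximal matchings, each of which covers all but exactly one vertex of K_{2n+1} (i.e., each matching has exactly n edges). -/
/-!
Identify the vertices of `K_{2n+1}` with `ℤ/(2n+1)` and colour the edge `{a, b}` by `a + b`.
Two edges of colour `i` through a vertex `v` are both `{v, i - v}`, so each colour class is a
matching. As `2` is invertible modulo `2n+1`, exactly one vertex `v` has `2v = i`; every other
vertex has exactly one neighbour in colour class `i`, so by the handshake lemma the class has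
`2n / 2 = n` edges.
-/

open SimpleGraph Finset

def Sym2.sum {α : Type*} [AddCommMagma α] : Sym2 α → α :=
  Sym2.lift ⟨(· + ·), add_comm⟩

@[simp]
theorem Sym2.sum_mk {α : Type*} [AddCommMagma α] (a b : α) : s(a, b).sum = a + b := rfl

theorem Sym2.eq_of_mem_of_sum_eq {α : Type*} [AddCancelCommMonoid α] {e₁ e₂ : Sym2 α} {v : α}
    (h₁ : v ∈ e₁) (h₂ : v ∈ e₂) (hsum : e₁.sum = e₂.sum) : e₁ = e₂ := by
  obtain ⟨w₁, rfl⟩ := Sym2.mem_iff_exists.mp h₁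
  obtain ⟨w₂, rfl⟩ := Sym2.mem_iff_exists.mp h₂
  rw [add_left_cancel (by simpa using hsum : v + w₁ = v + w₂)]

namespace SimpleGraph

variable {α : Type*} [AddCommGroup α]

def sumGraph (s : α) : SimpleGraph α where
  Adj a b := a ≠ b ∧ a + b = s
  symm := ⟨fun a b h => ⟨h.1.symm, add_comm a b ▸ h.2⟩⟩
  loopless := ⟨fun _ h => h.1 rfl⟩

@[simp]
theorem sumGraph_adj {s a b : α} : (sumGraph s).Adj a b ↔ a ≠ b ∧ a + b = s := Iff.rfl

theorem edgeSet_sumGraph (s : α) :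
    (sumGraph s).edgeSet = {e | e ∈ (⊤ : SimpleGraph α).edgeSet ∧ e.sum = s} := by
  ext e
  induction e using Sym2.ind
  simp

variable [Fintype α] [DecidableEq α] (s : α)

instance : DecidableRel (sumGraph s).Adj :=
  fun a b => inferInstanceAs (Decidable (a ≠ b ∧ a + b = s))

theorem neighborFinset_sumGraph (v : α) :
    (sumGraph s).neighborFinset v = if v + v = s then ∅ else {s - v} := by
  ext w
  simp only [mem_neighborFinset, sumGraph_adj]
  split_ifs with hv
  · simp only [notMem_empty, iff_false, not_and]
    rintro hne rfl
    exact hne (add_left_cancel hv)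
  · simp only [mem_singleton, eq_sub_iff_add_eq']
    exact ⟨And.right, fun h => ⟨by rintro rfl; exact hv h, h⟩⟩

theorem degree_sumGraph (v : α) :
    (sumGraph s).degree v = if v + v = s then 0 else 1 := by
  rw [← card_neighborFinset_eq_degree, neighborFinset_sumGraph]
  split_ifs <;> rfl

theorem two_mul_card_edgeFinset_sumGraph (hα : Odd (Fintype.card α)) :
    2 * #(sumGraph s).edgeFinset = Fintype.card α - 1 := by
  have hdouble : Function.Bijective (fun v : α => 2 • v) :=
    Nat.Coprime.nsmul_right_bijective (by simpa [Nat.card_eq_fintype_card] using hα)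
  obtain ⟨h, hh, huniq⟩ := hdouble.existsUnique s
  have hhalf (v : α) : v + v = s ↔ v = h := by
    rw [← two_nsmul]
    exact ⟨huniq v, fun hv => hv ▸ hh⟩
  rw [← sum_degrees_eq_twice_card_edges]
  simp_rw [degree_sumGraph, hhalf]
  rw [sum_ite, sum_const_zero, zero_add, sum_const, smul_eq_mul, mul_one, filter_ne',
    card_erase_of_mem (mem_univ h), card_univ]

end SimpleGraph

/-- The complete graph `K_{2n+1}` decomposes into `2n+1` pairwise edge-disjoint
matchings, each with exactly `n` edges (hence each covers all but one vertex).
The decomposition is encoded by a function `c` assigning to each edge of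
`K_{2n+1}` one of `2n+1` classes; each class is a matching with `n` edges. -/
theorem completeGraph_odd_matching_decomposition (n : ℕ) :
    ∃ c : Sym2 (Fin (2 * n + 1)) → Fin (2 * n + 1),
      ∀ i : Fin (2 * n + 1),
        ({e | e ∈ (⊤ : SimpleGraph (Fin (2 * n + 1))).edgeSet ∧ c e = i} :
            Set (Sym2 (Fin (2 * n + 1)))).ncard = n ∧
        ∀ e₁ ∈ (⊤ : SimpleGraph (Fin (2 * n + 1))).edgeSet,
          ∀ e₂ ∈ (⊤ : SimpleGraph (Fin (2 * n + 1))).edgeSet,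
            c e₁ = i → c e₂ = i → e₁ ≠ e₂ →
              ∀ v : Fin (2 * n + 1), ¬ (v ∈ e₁ ∧ v ∈ e₂) := by
  refine ⟨Sym2.sum, fun i => ⟨?_, ?_⟩⟩
  · have hcard : 2 * #(sumGraph i).edgeFinset = 2 * n + 1 - 1 := by
      simpa using two_mul_card_edgeFinset_sumGraph i (by simp)
    rw [← edgeSet_sumGraph, ← coe_edgeFinset, Set.ncard_coe_finset]
    omega
  · rintro e₁ - e₂ - h₁ h₂ hne v ⟨hv₁, hv₂⟩
    exact hne (Sym2.eq_of_mem_of_sum_eq hv₁ hv₂ (h₁.trans h₂.symm))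
end

section
/- For every n ≥ 2, the set-coloring Ramsey number R_{3,2}(P_3, P_n, P_n) equals n; that is, n is the least N such that every coloring of the edges of K_N where each edge receives a 2-element subset of {1,2,3} contains either a copy of P_3 all of whose edge-color-sets contain 1, or a copy of P_n all of whose edge-color-sets contain 2, or a copy of P_n all of whose edge-color-sets contain 3. -/
/-!
An edge whose colour set misses `1` has colour set `{0, 2}`. Unless colour `0` contains a `P₃`,
these edges therefore form a matching, and the complement of a matching on at least three
vertices has a Hamiltonian path: grow a path one vertex at a time, attaching the new vertex at
whichever end it is not matched to. That path is a `Pₙ` in colour `1`; the case `n = 2` is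
immediate. Conversely, colouring every edge of `K_{n-1}` by `{1, 2}` avoids all three paths.
-/

open SimpleGraph

namespace SimpleGraph

variable {V : Type*} {G : SimpleGraph V}

lemma exists_isPath_compl_length_succ (hG : ∀ v, (G.neighborSet v).Subsingleton) {a b x : V}
    (hab : a ≠ b) (p : Gᶜ.Walk a b) (hp : p.IsPath) (hx : x ∉ p.support) :
    ∃ (c d : V) (q : Gᶜ.Walk c d), q.IsPath ∧ c ≠ d ∧ q.length = p.length + 1 := by
  have hxa : x ≠ a := fun h => hx (h ▸ p.start_mem_support)
  have hxb : x ≠ b := fun h => hx (h ▸ p.end_mem_support)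
  by_cases hadj : G.Adj x a
  · have hbx : Gᶜ.Adj b x :=
      (G.compl_adj b x).2 ⟨hxb.symm, fun hbx => hab (hG x hadj hbx.symm)⟩
    exact ⟨a, x, p.concat hbx, hp.concat hx hbx, hxa.symm, p.length_concat hbx⟩
  · have hxa' : Gᶜ.Adj x a := (G.compl_adj x a).2 ⟨hxa, hadj⟩
    exact ⟨x, b, .cons hxa' p, hp.cons hx, hxb, rfl⟩

theorem pathGraph_three_isContained {u v w : V} (hv : G.Adj u v) (hw : G.Adj u w) (hvw : v ≠ w) :
    pathGraph 3 ⊑ G := by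
  refine ⟨⟨⟨![v, u, w], fun {i j} hij => ?_⟩, fun i j hij => ?_⟩⟩
  · rw [pathGraph_adj] at hij
    fin_cases i <;> fin_cases j <;> simp_all [G.adj_comm]
  · fin_cases i <;> fin_cases j <;> simp_all [hv.ne, hw.ne, hv.ne.symm, hw.ne.symm, eq_comm]

variable [Fintype V]

lemma exists_compl_adj (hG : ∀ v, (G.neighborSet v).Subsingleton) (h3 : 2 < Fintype.card V) :
    ∃ a b, Gᶜ.Adj a b := by
  obtain ⟨a, b, c, hab, hac, hbc⟩ := Fintype.two_lt_card_iff.1 h3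
  by_cases hb : G.Adj a b
  · exact ⟨a, c, (G.compl_adj a c).2 ⟨hac, fun hc => hbc (hG a hb hc)⟩⟩
  · exact ⟨a, b, (G.compl_adj a b).2 ⟨hab, hb⟩⟩

lemma Walk.IsPath.exists_notMem_support [DecidableEq V] {a b : V} {p : G.Walk a b}
    (hp : p.IsPath) (hlen : p.length + 1 < Fintype.card V) : ∃ x, x ∉ p.support := by
  by_contra! h
  have := (hp.isHamiltonian_iff.2 h).length_eq
  omega

lemma exists_isPath_compl_of_length_lt (hG : ∀ v, (G.neighborSet v).Subsingleton)
    (h3 : 2 < Fintype.card V) (k : ℕ) (hk : k + 1 < Fintype.card V) :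
    ∃ (c d : V) (q : Gᶜ.Walk c d), q.IsPath ∧ c ≠ d ∧ q.length = k + 1 := by
  induction k with
  | zero =>
    obtain ⟨a, b, hab⟩ := exists_compl_adj hG h3
    exact ⟨a, b, hab.toWalk, hab.isPath_toWalk, hab.ne, hab.length_toWalk⟩
  | succ k ih =>
    obtain ⟨c, d, q, hq, hcd, hlen⟩ := ih (by omega)
    classical
    obtain ⟨x, hx⟩ := hq.exists_notMem_support (by omega)
    exact hlen ▸ exists_isPath_compl_length_succ hG hcd q hq hx

theorem exists_isHamiltonian_compl [DecidableEq V] (hG : ∀ v, (G.neighborSet v).Subsingleton)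
    (h3 : 2 < Fintype.card V) : ∃ (a b : V) (p : Gᶜ.Walk a b), p.IsHamiltonian := by
  obtain ⟨a, b, p, hp, -, hlen⟩ :=
    exists_isPath_compl_of_length_lt hG h3 (Fintype.card V - 2) (by omega)
  exact ⟨a, b, p, Walk.isHamiltonian_iff_isPath_and_length_eq.2 ⟨hp, by omega⟩⟩

theorem pathGraph_isContained_compl (hG : ∀ v, (G.neighborSet v).Subsingleton)
    (h3 : 2 < Fintype.card V) : pathGraph (Fintype.card V) ⊑ Gᶜ := by
  classical
  obtain ⟨a, b, p, hp⟩ := exists_isHamiltonian_compl hG h3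
  have hlen : p.length + 1 = Fintype.card V := p.length_support ▸ hp.length_support
  exact hlen ▸ ⟨hp.isPath.pathGraphCopy⟩

end SimpleGraph

variable {V W κ : Type*}

def colorGraph (χ : Sym2 V → Finset κ) (i : κ) : SimpleGraph V :=
  .fromRel fun u v => i ∈ χ s(u, v)

lemma colorGraph_adj {χ : Sym2 V → Finset κ} {i : κ} {u v : V} :
    (colorGraph χ i).Adj u v ↔ u ≠ v ∧ i ∈ χ s(u, v) := by
  simp [colorGraph, Sym2.eq_swap]

lemma exists_injective_of_isContained_colorGraph {A : SimpleGraph W} {χ : Sym2 V → Finset κ}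
    {i : κ} (h : A ⊑ colorGraph χ i) :
    ∃ f : W → V, Function.Injective f ∧ ∀ u v, A.Adj u v → i ∈ χ s(f u, f v) := by
  obtain ⟨f⟩ := h
  exact ⟨f, f.injective, fun u v huv => (colorGraph_adj.1 (f.toHom.map_adj huv)).2⟩

lemma zero_mem_of_card_eq_two_of_one_notMem {s : Finset (Fin 3)} (hs : s.card = 2) (h1 : 1 ∉ s) :
    0 ∈ s := by
  revert s; decide

lemma one_mem_or_two_mem_of_card_eq_two {s : Finset (Fin 3)} (hs : s.card = 2) :
    1 ∈ s ∨ 2 ∈ s := by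
  revert s; decide

lemma compl_colorGraph_one_le_colorGraph_zero {χ : Sym2 V → Finset (Fin 3)}
    (hχ : ∀ e, ¬ e.IsDiag → (χ e).card = 2) : (colorGraph χ 1)ᶜ ≤ colorGraph χ 0 := by
  intro u v huv
  obtain ⟨hne, h1⟩ := (compl_adj _ u v).1 huv
  have h1 : 1 ∉ χ s(u, v) := fun h => h1 (colorGraph_adj.2 ⟨hne, h⟩)
  exact colorGraph_adj.2
    ⟨hne, zero_mem_of_card_eq_two_of_one_notMem (hχ _ (by simpa using hne)) h1⟩

lemma pathGraph_three_isContained_or_pathGraph_card_isContained [Fintype V]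
    {χ : Sym2 V → Finset (Fin 3)} (hχ : ∀ e, ¬ e.IsDiag → (χ e).card = 2)
    (h3 : 2 < Fintype.card V) :
    pathGraph 3 ⊑ colorGraph χ 0 ∨ pathGraph (Fintype.card V) ⊑ colorGraph χ 1 := by
  set G := (colorGraph χ 1)ᶜ
  by_cases hG : ∀ v, (G.neighborSet v).Subsingleton
  · right
    simpa [G] using pathGraph_isContained_compl hG h3
  · left
    obtain ⟨u, hu⟩ := not_forall.1 hG
    obtain ⟨v, hv, w, hw, hvw⟩ := Set.not_subsingleton_iff.1 hu
    exact (pathGraph_three_isContained hv hw hvw).trans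
      (.of_le (compl_colorGraph_one_le_colorGraph_zero hχ))

lemma pathGraph_two_le_colorGraph {χ : Sym2 (Fin 2) → Finset κ} {i : κ}
    (h : i ∈ χ s(0, 1)) : pathGraph 2 ≤ colorGraph χ i := by
  intro u v huv
  rw [colorGraph_adj]
  fin_cases u <;> fin_cases v <;> simp_all [pathGraph_adj, Sym2.eq_swap]

/-- `R_{3,2}(P₃, Pₙ, Pₙ) = n` for `n ≥ 2`: `n` is the least `N` such that every
coloring of the edges of `K_N` by 2-element subsets of `{1,2,3}` (here `Fin 3`)
contains a copy of `P₃` all of whose edge-color-sets contain color `0`, or a copy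
of `Pₙ` all of whose edge-color-sets contain color `1`, or a copy of `Pₙ` all of
whose edge-color-sets contain color `2`. -/
theorem setRamsey_three_two_P3_Pn_Pn (n : ℕ) (hn : 2 ≤ n) :
    IsLeast {N : ℕ | ∀ χ : Sym2 (Fin N) → Finset (Fin 3),
      (∀ e : Sym2 (Fin N), ¬ e.IsDiag → (χ e).card = 2) →
      ((∃ f : Fin 3 → Fin N, Function.Injective f ∧
          ∀ u v, (pathGraph 3).Adj u v → (0 : Fin 3) ∈ χ s(f u, f v)) ∨
       (∃ f : Fin n → Fin N, Function.Injective f ∧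
          ∀ u v, (pathGraph n).Adj u v → (1 : Fin 3) ∈ χ s(f u, f v)) ∨
       (∃ f : Fin n → Fin N, Function.Injective f ∧
          ∀ u v, (pathGraph n).Adj u v → (2 : Fin 3) ∈ χ s(f u, f v)))} n := by
  refine ⟨fun χ hχ => ?_, fun N hN => ?_⟩
  · rcases (show n = 2 ∨ 2 < n by omega) with rfl | h3
    · rcases one_mem_or_two_mem_of_card_eq_two (hχ s(0, 1) (by decide)) with h | h
      · exact .inr (.inl (exists_injective_of_isContained_colorGraph
          (.of_le (pathGraph_two_le_colorGraph h))))
      · exact .inr (.inr (exists_injective_of_isContained_colorGraph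
          (.of_le (pathGraph_two_le_colorGraph h))))
    · rcases pathGraph_three_isContained_or_pathGraph_card_isContained hχ
        (by simpa using h3) with h | h
      · exact .inl (exists_injective_of_isContained_colorGraph h)
      · rw [Fintype.card_fin] at h
        exact .inr (.inl (exists_injective_of_isContained_colorGraph h))
  · by_contra! hNn
    rcases hN (fun _ => {1, 2}) (fun _ _ => rfl) with
      ⟨f, -, hf⟩ | ⟨f, hf, -⟩ | ⟨f, hf, -⟩
    · exact absurd (hf 0 1 (pathGraph_adj.2 (.inl rfl))) (by decide)
    all_goals exact absurd (Fintype.card_le_of_injective f hf) (by simpa using hNn)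
end

section
/- For every n ≥ 2, the set-coloring Ramsey number R_{3,2}(K_3, P_n, P_n) equals n. -/
/-!
Let `G` be the graph of the edges whose colour set avoids `0`; each of them carries both colours
`1` and `2`. If colour `0` has no triangle, every three vertices span an edge of `G`, and induction
on the vertices shows that `G` then has a Hamiltonian path or is the disjoint union of two cliques.
A Hamiltonian path of `G` is one in colour `1`. Two cliques of `G` are joined by an edge containing
`0`, hence also `1` or `2`, and crossing that edge once gives a Hamiltonian path in its colour.
The constant colouring `{1, 2}` shows that fewer than `n` vertices do not suffice.
-/

open SimpleGraph

theorem Finset.mem_of_ne_of_notMem_of_card_add_one_eq {α : Type*} [Fintype α] {s : Finset α}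
    (hs : s.card + 1 = Fintype.card α) {a b : α} (ha : a ∉ s) (hba : b ≠ a) : b ∈ s := by
  classical
  have huniv : insert a s = Finset.univ :=
    Finset.eq_univ_of_card _ (by rw [Finset.card_insert_of_notMem ha, hs])
  have hb := Finset.mem_univ b
  rw [← huniv, Finset.mem_insert] at hb
  exact hb.resolve_left hba

namespace SimpleGraph

variable {V : Type*} {G : SimpleGraph V}

theorem adj_or_adj_or_adj_of_compl_cliqueFree_three (hG : Gᶜ.CliqueFree 3) {u v w : V}
    (huv : u ≠ v) (huw : u ≠ w) (hvw : v ≠ w) : G.Adj u v ∨ G.Adj u w ∨ G.Adj v w := by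
  classical
  by_contra! h
  exact hG {u, v, w}
    (is3Clique_triple_iff.2 ⟨⟨huv, h.1⟩, ⟨huw, h.2.1⟩, ⟨hvw, h.2.2⟩⟩)

theorem exists_isChain_perm_cons_of_adj (hG : Gᶜ.CliqueFree 3) {l : List V} {w x : V}
    (hl : l.Nodup) (hc : l.IsChain G.Adj) (hw : w ∉ l) (hx : x ∈ l) (hwx : G.Adj w x) :
    ∃ l' : List V, l'.Perm (w :: l) ∧ l'.IsChain G.Adj := by
  by_cases hlast : ∀ y ∈ l.getLast?, G.Adj y w
  · exact ⟨l ++ [w], List.perm_append_singleton w l,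
      List.isChain_append.2 ⟨hc, List.isChain_singleton w, by simpa using hlast⟩⟩
  obtain ⟨_ | ⟨u, p⟩, q, rfl⟩ := List.append_of_mem hx
  · exact ⟨w :: x :: q, .rfl, List.isChain_cons_cons.2 ⟨hwx, hc⟩⟩
  by_cases hwu : G.Adj w u
  · exact ⟨w :: (u :: p ++ x :: q), .rfl, List.isChain_cons_cons.2 ⟨hwu, hc⟩⟩
  obtain rfl | ⟨q, v, rfl⟩ := q.eq_nil_or_concat
  · simp [List.getLast?_cons, hwx.symm] at hlast
  simp only [List.concat_eq_append] at hlast hl hw hc ⊢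
  have hwv : ¬G.Adj w v := fun hwv ↦ hlast (by simpa [List.getLast?_cons] using hwv.symm)
  -- `w` sees neither end of the path, so its ends are adjacent and it closes into a cycle
  have hvu : G.Adj v u := by
    have huv : u ≠ v := by rintro rfl; simp at hl
    refine (((adj_or_adj_or_adj_of_compl_cliqueFree_three hG ?_ ?_ huv).resolve_left
      hwu).resolve_left hwv).symm <;> rintro rfl <;> simp at hw
  obtain ⟨hc₁, hc₂, -⟩ := List.isChain_append.1 hc
  refine ⟨w :: (x :: (q ++ [v]) ++ u :: p), List.perm_append_comm.cons w,
    List.isChain_cons_cons.2 ⟨hwx, List.isChain_append.2 ⟨hc₂, hc₁, ?_⟩⟩⟩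
  simpa [List.getLast?_cons] using hvu

def TraceableOrTwoCliques (G : SimpleGraph V) (L : List V) : Prop :=
  (∃ l : List V, l.Perm L ∧ l.IsChain G.Adj) ∨
    ∃ A B : List V, (A ++ B).Perm L ∧ A.Pairwise G.Adj ∧ B.Pairwise G.Adj ∧
      ∀ a ∈ A, ∀ b ∈ B, Gᶜ.Adj a b

theorem TraceableOrTwoCliques.perm {L L' : List V} (h : G.TraceableOrTwoCliques L)
    (hL : L.Perm L') : G.TraceableOrTwoCliques L' :=
  h.imp (fun ⟨l, hl, hc⟩ ↦ ⟨l, hl.trans hL, hc⟩) fun ⟨A, B, hAB, h⟩ ↦ ⟨A, B, hAB.trans hL, h⟩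

theorem traceableOrTwoCliques_cons_of_isChain (hG : Gᶜ.CliqueFree 3) {l : List V} {w : V}
    (hl : l.Nodup) (hc : l.IsChain G.Adj) (hw : w ∉ l) : G.TraceableOrTwoCliques (w :: l) := by
  by_cases hx : ∃ x ∈ l, G.Adj w x
  · obtain ⟨x, hx, hwx⟩ := hx
    exact .inl (exists_isChain_perm_cons_of_adj hG hl hc hw hx hwx)
  push Not at hx
  have hne : ∀ a ∈ l, w ≠ a := fun a ha hwa ↦ hw (hwa ▸ ha)
  refine .inr ⟨l, [w], List.perm_append_singleton w l,
    hl.pairwise_of_forall_ne fun a ha b hb hab ↦ ?_, List.pairwise_singleton _ _, ?_⟩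
  · exact ((adj_or_adj_or_adj_of_compl_cliqueFree_three hG (hne a ha) (hne b hb)
      hab).resolve_left (hx a ha)).resolve_left (hx b hb)
  · simp only [List.mem_singleton, forall_eq, compl_adj]
    exact fun a ha ↦ ⟨(hne a ha).symm, fun h ↦ hx a ha h.symm⟩

theorem traceableOrTwoCliques_cons_of_forall_adj {A B : List V} {w : V} (hA : A.Pairwise G.Adj)
    (hB : B.Pairwise G.Adj) (hAB : ∀ a ∈ A, ∀ b ∈ B, Gᶜ.Adj a b) (hwB : w ∉ B)
    (hwA : ∀ a ∈ A, G.Adj w a) : G.TraceableOrTwoCliques (w :: (A ++ B)) := by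
  have hwA' : (w :: A).Pairwise G.Adj := List.pairwise_cons.2 ⟨hwA, hA⟩
  by_cases hb : ∃ b ∈ B, G.Adj w b
  · obtain ⟨b, hb, hwb⟩ := hb
    obtain ⟨B₁, B₂, rfl⟩ := List.append_of_mem hb
    have hperm : (B₁ ++ B₂ ++ [b]).Perm (B₁ ++ b :: B₂) := by
      simpa using (List.perm_append_singleton b (B₁ ++ B₂)).trans List.perm_middle.symm
    exact .inl ⟨B₁ ++ B₂ ++ [b] ++ w :: A,
      ((hperm.append_right _).trans List.perm_middle).trans (List.perm_append_comm.cons w),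
      List.isChain_append.2 ⟨(hperm.symm.pairwise hB fun h ↦ h.symm).isChain, hwA'.isChain,
        by simpa using hwb.symm⟩⟩
  push Not at hb
  refine .inr ⟨w :: A, B, .rfl, hwA', hB, ?_⟩
  simp only [List.mem_cons, forall_eq_or_imp, compl_adj]
  exact ⟨fun b hb' ↦ ⟨fun h ↦ hwB (h ▸ hb'), hb b hb'⟩,
    fun a ha b hb ↦ (compl_adj ..).1 (hAB a ha b hb)⟩

theorem traceableOrTwoCliques_cons_of_twoCliques (hG : Gᶜ.CliqueFree 3) {A B : List V} {w : V}
    (hA : A.Pairwise G.Adj) (hB : B.Pairwise G.Adj) (hAB : ∀ a ∈ A, ∀ b ∈ B, Gᶜ.Adj a b)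
    (hw : w ∉ A ++ B) : G.TraceableOrTwoCliques (w :: (A ++ B)) := by
  have hne : ∀ a ∈ A ++ B, w ≠ a := fun a ha hwa ↦ hw (hwa ▸ ha)
  have hside : (∀ a ∈ A, G.Adj w a) ∨ ∀ b ∈ B, G.Adj w b := by
    by_contra! ⟨⟨a, ha, hwa⟩, b, hb, hwb⟩
    obtain ⟨hab, hab'⟩ := (compl_adj ..).1 (hAB a ha b hb)
    exact hab' (((adj_or_adj_or_adj_of_compl_cliqueFree_three hG (hne a (by simp [ha]))
      (hne b (by simp [hb])) hab).resolve_left hwa).resolve_left hwb)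
  rcases hside with hwA | hwB
  · exact traceableOrTwoCliques_cons_of_forall_adj hA hB hAB (fun h ↦ hw (by simp [h])) hwA
  · exact (traceableOrTwoCliques_cons_of_forall_adj hB hA
      (fun b hb a ha ↦ (hAB a ha b hb).symm) (fun h ↦ hw (by simp [h])) hwB).perm
      (List.perm_append_comm.cons w)

theorem traceableOrTwoCliques_of_compl_cliqueFree (hG : Gᶜ.CliqueFree 3) :
    ∀ {L : List V}, L.Nodup → G.TraceableOrTwoCliques L
  | [], _ => .inl ⟨[], .rfl, List.isChain_nil⟩
  | w :: L, hL => by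
    obtain ⟨hw, hL⟩ := List.nodup_cons.1 hL
    rcases traceableOrTwoCliques_of_compl_cliqueFree hG hL with
      ⟨l, hl, hc⟩ | ⟨A, B, hAB, hA, hB, hcross⟩
    · exact (traceableOrTwoCliques_cons_of_isChain hG (hl.nodup_iff.2 hL) hc
        (hl.mem_iff.not.2 hw)).perm (hl.cons w)
    · exact (traceableOrTwoCliques_cons_of_twoCliques hG hA hB hcross
        (hAB.mem_iff.not.2 hw)).perm (hAB.cons w)

theorem exists_injective_pathGraph_adj_of_isChain {l : List V} {n : ℕ} (hl : l.Nodup)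
    (hc : l.IsChain G.Adj) (hn : l.length = n) :
    ∃ f : Fin n → V,
      Function.Injective f ∧ ∀ u v, (pathGraph n).Adj u v → G.Adj (f u) (f v) := by
  subst hn
  have hsucc : ∀ u v : Fin l.length, u.val + 1 = v.val → G.Adj (l.get u) (l.get v) := by
    rintro ⟨u, hu⟩ ⟨v, hv⟩ (rfl : u + 1 = v)
    exact List.isChain_iff_getElem.1 hc u hv
  refine ⟨l.get, List.nodup_iff_injective_get.1 hl, fun u v huv ↦ ?_⟩
  rcases pathGraph_adj.1 huv with h | h
  exacts [hsucc u v h, (hsucc v u h).symm]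

section Coloring

variable {χ : Sym2 V → Finset (Fin 3)}

theorem compl_fromEdgeSet_le_fromEdgeSet (hχ : ∀ e : Sym2 V, ¬ e.IsDiag → (χ e).card = 2)
    {c : Fin 3} (hc : c ≠ 0) : (fromEdgeSet {e | 0 ∈ χ e})ᶜ ≤ fromEdgeSet {e | c ∈ χ e} := by
  intro u v huv
  simp only [compl_adj, fromEdgeSet_adj, Set.mem_ofPred_eq] at huv ⊢
  refine ⟨Finset.mem_of_ne_of_notMem_of_card_add_one_eq ?_ (fun h ↦ huv.2 ⟨h, huv.1⟩) hc,
    huv.1⟩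
  rw [hχ _ (Sym2.mk_isDiag_iff.not.2 huv.1)]
  rfl

theorem exists_isChain_perm_fromEdgeSet (hχ : ∀ e : Sym2 V, ¬ e.IsDiag → (χ e).card = 2)
    (h0 : (fromEdgeSet {e | 0 ∈ χ e}).CliqueFree 3) {L : List V} (hL : L.Nodup) :
    ∃ c ≠ 0, ∃ l : List V, l.Perm L ∧ l.IsChain (fromEdgeSet {e | c ∈ χ e}).Adj := by
  have hG : (fromEdgeSet {e | 0 ∈ χ e})ᶜᶜ.CliqueFree 3 := by rwa [compl_compl]
  rcases traceableOrTwoCliques_of_compl_cliqueFree hG hL with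
    ⟨l, hl, hc⟩ | ⟨A, B, hAB, hA, hB, hcross⟩
  · exact ⟨1, by decide, l, hl, hc.imp (compl_fromEdgeSet_le_fromEdgeSet hχ (by decide))⟩
  obtain ⟨c, hc0, hlink⟩ : ∃ c ≠ 0, ∀ a ∈ A.getLast?, ∀ b ∈ B.head?,
      (fromEdgeSet {e | c ∈ χ e}).Adj a b := by
    cases ha : A.getLast? with
    | none => exact ⟨1, by decide, by simp⟩
    | some a =>
      cases hb : B.head? with
      | none => exact ⟨1, by decide, by simp⟩
      | some b =>
        have hab := hcross a (List.mem_of_getLast? ha) b (List.mem_of_head? hb)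
        rw [compl_compl, fromEdgeSet_adj] at hab
        obtain ⟨c, hc, hc0⟩ := Finset.exists_mem_ne
          (by rw [hχ _ (Sym2.mk_isDiag_iff.not.2 hab.2)]; decide) (0 : Fin 3)
        exact ⟨c, hc0, by simpa [fromEdgeSet_adj] using ⟨hc, hab.2⟩⟩
  have hle := compl_fromEdgeSet_le_fromEdgeSet hχ hc0
  exact ⟨c, hc0, A ++ B, hAB, List.isChain_append.2
    ⟨(hA.imp fun h ↦ hle h).isChain, (hB.imp fun h ↦ hle h).isChain, hlink⟩⟩

end Coloring

end SimpleGraph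

theorem setRamsey_three_two_K3_Pn_Pn_general (n : ℕ) :
    IsLeast {N : ℕ | ∀ χ : Sym2 (Fin N) → Finset (Fin 3),
      (∀ e : Sym2 (Fin N), ¬ e.IsDiag → (χ e).card = 2) →
      ((∃ f : Fin 3 → Fin N, Function.Injective f ∧
          ∀ u v, (⊤ : SimpleGraph (Fin 3)).Adj u v → (0 : Fin 3) ∈ χ s(f u, f v)) ∨
       (∃ f : Fin n → Fin N, Function.Injective f ∧
          ∀ u v, (pathGraph n).Adj u v → (1 : Fin 3) ∈ χ s(f u, f v)) ∨
       (∃ f : Fin n → Fin N, Function.Injective f ∧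
          ∀ u v, (pathGraph n).Adj u v → (2 : Fin 3) ∈ χ s(f u, f v)))} n := by
  refine ⟨fun χ hχ ↦ ?_, fun N hN ↦ ?_⟩
  · by_cases h0 : (fromEdgeSet {e | 0 ∈ χ e}).CliqueFree 3
    · obtain ⟨c, hc0, l, hl, hc⟩ :=
        exists_isChain_perm_fromEdgeSet hχ h0 (List.nodup_finRange n)
      obtain ⟨f, hf, hfc⟩ := exists_injective_pathGraph_adj_of_isChain
        (hl.nodup_iff.2 (List.nodup_finRange n)) hc (hl.length_eq.trans List.length_finRange)
      have hpath : ∀ u v, (pathGraph n).Adj u v → c ∈ χ s(f u, f v) :=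
        fun u v huv ↦ (fromEdgeSet_adj _).1 (hfc u v huv) |>.1
      rcases (by omega : c = 1 ∨ c = 2) with rfl | rfl
      exacts [.inr (.inl ⟨f, hf, hpath⟩), .inr (.inr ⟨f, hf, hpath⟩)]
    · let f := topEmbeddingOfNotCliqueFree h0
      exact .inl ⟨f, f.injective,
        fun u v huv ↦ ((fromEdgeSet_adj _).1 (f.map_adj_iff.2 huv)).1⟩
  · by_contra! hNn
    rcases hN (fun _ ↦ {1, 2}) (fun _ _ ↦ rfl) with ⟨f, -, hf⟩ | ⟨f, hf, -⟩ | ⟨f, hf, -⟩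
    · exact absurd (hf 0 1 (by decide)) (by decide)
    all_goals exact absurd (Fintype.card_le_of_injective f hf) (by simpa using hNn)

/-- `R_{3,2}(K₃, Pₙ, Pₙ) = n` for `n ≥ 2`. -/
theorem setRamsey_three_two_K3_Pn_Pn (n : ℕ) (hn : 2 ≤ n) :
    IsLeast {N : ℕ | ∀ χ : Sym2 (Fin N) → Finset (Fin 3),
      (∀ e : Sym2 (Fin N), ¬ e.IsDiag → (χ e).card = 2) →
      ((∃ f : Fin 3 → Fin N, Function.Injective f ∧
          ∀ u v, (⊤ : SimpleGraph (Fin 3)).Adj u v → (0 : Fin 3) ∈ χ s(f u, f v)) ∨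
       (∃ f : Fin n → Fin N, Function.Injective f ∧
          ∀ u v, (pathGraph n).Adj u v → (1 : Fin 3) ∈ χ s(f u, f v)) ∨
       (∃ f : Fin n → Fin N, Function.Injective f ∧
          ∀ u v, (pathGraph n).Adj u v → (2 : Fin 3) ∈ χ s(f u, f v)))} n :=
  setRamsey_three_two_K3_Pn_Pn_general n
end

section
/- Let n_1,…,n_r, r, s be positive integers with 3 ≤ n_1 ≤ … ≤ n_r and r > s. Then R_{r,s}(K_{1,n_1},…,K_{1,n_r}) ≤ ⌈(n_1 + n_2 + … + n_r − r + 1)/s⌉ + 1. -/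
open SimpleGraph Finset

/-- `K_N` (with vertices `Fin N`) colored by `χ` contains a copy of `H` all of
whose edges' color sets contain the color element `i`. -/
def MonoCopy {W : Type} (H : SimpleGraph W) {N r : ℕ}
    (χ : Sym2 (Fin N) → Finset (Fin r)) (i : Fin r) : Prop :=
  ∃ f : W → Fin N, Function.Injective f ∧ ∀ u v, H.Adj u v → i ∈ χ s(f u, f v)

/-- Every `(r,s)`-coloring of the edges of `K_N` (each edge gets an `s`-element
subset of `Fin r`) yields, for some `i`, a copy of `G i` monochromatic with
color element `i`. -/
def SetRamseyProp {r : ℕ} (s : ℕ) {V : Fin r → Type} (G : ∀ i, SimpleGraph (V i))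
    (N : ℕ) : Prop :=
  ∀ χ : Sym2 (Fin N) → Finset (Fin r),
    (∀ e : Sym2 (Fin N), ¬ e.IsDiag → (χ e).card = s) →
    ∃ i, MonoCopy (G i) χ i

/-- The set-coloring Ramsey number `R_{r,s}(G₁,…,G_r)`. -/
noncomputable def setRamsey {r : ℕ} (s : ℕ) {V : Fin r → Type}
    (G : ∀ i, SimpleGraph (V i)) : ℕ :=
  sInf {N | SetRamseyProp s G N}

/-!
Look at the `N` edges at one vertex `v` of `K_{N+1}`. They carry `s * N` color incidences in
total, so if `s * N > ∑ᵢ (nᵢ - 1)` some color `i` lies on at least `nᵢ` of them, and those edges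
form a star `K_{1,nᵢ}` centred at `v` in color `i`. The smallest admissible `N` is
`⌈(∑ᵢ nᵢ - r + 1) / s⌉`.
-/

lemma exists_le_card_filter_mem {ι α : Type*} [Fintype ι] [DecidableEq ι] (B : Finset α)
    (χ : α → Finset ι) (n : ι → ℕ) (h : ∑ i, (n i - 1) < ∑ u ∈ B, #(χ u)) :
    ∃ i, n i ≤ #{u ∈ B | i ∈ χ u} := by
  have hcount : ∑ u ∈ B, #(χ u) = ∑ i, #{u ∈ B | i ∈ χ u} := by
    have := sum_card_bipartiteAbove_eq_sum_card_bipartiteBelow (s := B) (t := univ)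
      (r := fun u i => i ∈ χ u)
    simpa [bipartiteAbove, bipartiteBelow] using this
  obtain ⟨i, -, hi⟩ := exists_lt_of_sum_lt (hcount ▸ h)
  exact ⟨i, by omega⟩

lemma monoCopy_star {N r m : ℕ} (χ : Sym2 (Fin N) → Finset (Fin r)) (i : Fin r) (v : Fin N)
    (T : Finset (Fin N)) (hvT : v ∉ T) (hmT : m ≤ #T) (hT : ∀ u ∈ T, i ∈ χ s(v, u)) :
    MonoCopy (completeBipartiteGraph Unit (Fin m)) χ i := by
  have ⟨g⟩ : Nonempty (Fin m ↪ T) :=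
    Function.Embedding.nonempty_of_card_le (by simpa using hmT)
  refine ⟨Sum.elim (fun _ => v) (fun k => g k), ?_, ?_⟩
  · refine Function.Injective.sumElim (fun _ _ _ => rfl) ?_ fun _ k hk => hvT (hk ▸ (g k).2)
    exact Subtype.val_injective.comp g.injective
  · rintro (_ | k) (_ | k') hadj <;> simp at hadj
    · exact hT _ (g k').2
    · simpa [Sym2.eq_swap] using hT _ (g k).2

lemma setRamseyProp_stars_succ {r : ℕ} (s N : ℕ) (n : Fin r → ℕ)
    (h : ∑ i, (n i - 1) < s * N) :
    SetRamseyProp s (fun i => completeBipartiteGraph Unit (Fin (n i))) (N + 1) := by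
  intro χ hχ
  let B : Finset (Fin (N + 1)) := univ.erase 0
  have hedges : ∑ u ∈ B, #(χ s(0, u)) = s * N := by
    rw [sum_congr rfl fun u hu => hχ _ (by simpa [eq_comm] using ne_of_mem_erase hu)]
    simp [B, mul_comm]
  obtain ⟨i, hi⟩ := exists_le_card_filter_mem B (fun u => χ s(0, u)) n (hedges ▸ h)
  exact ⟨i, monoCopy_star χ i 0 _ (by simp [B]) hi fun u hu => (mem_filter.mp hu).2⟩

lemma lt_mul_ceil_add_one_div (a : ℤ) {s : ℕ} (hs : 0 < s) :
    a < s * ⌈((a : ℚ) + 1) / s⌉ := by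
  have hsQ : (0 : ℚ) < s := by exact_mod_cast hs
  have h := (div_le_iff₀ hsQ).mp (Int.le_ceil (((a : ℚ) + 1) / s))
  have : (a : ℚ) < s * ⌈((a : ℚ) + 1) / s⌉ := by linarith
  exact_mod_cast this

theorem setRamsey_stars_upper_general (r s : ℕ) (hs : 0 < s)
    (n : Fin r → ℕ) (hn : ∀ i, 3 ≤ n i) :
    (setRamsey s (fun i => completeBipartiteGraph Unit (Fin (n i))) : ℤ)
      ≤ ⌈((∑ i, (n i : ℚ)) - r + 1) / s⌉ + 1 := by
  set a : ℕ := ∑ i, (n i - 1)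
  set c : ℤ := ⌈((∑ i, (n i : ℚ)) - r + 1) / s⌉
  have ha : ((a : ℤ) : ℚ) = (∑ i, (n i : ℚ)) - r := by
    rw [Int.cast_natCast, Nat.cast_sum,
      sum_congr rfl fun i _ => Nat.cast_sub (by linarith [hn i] : 1 ≤ n i)]
    simp
  have hc : (a : ℤ) < s * c := by
    simpa only [c, ha] using lt_mul_ceil_add_one_div a hs
  have hc0 : 0 ≤ c := (pos_of_mul_pos_right (by omega) s.cast_nonneg).le
  have hN : a < s * c.toNat := by
    zify; rwa [Int.toNat_of_nonneg hc0]
  calc (setRamsey s (fun i => completeBipartiteGraph Unit (Fin (n i))) : ℤ)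
      ≤ ((c.toNat + 1 : ℕ) : ℤ) :=
        Nat.cast_le.mpr (Nat.sInf_le (setRamseyProp_stars_succ s _ n hN))
    _ = c + 1 := by rw [Nat.cast_add, Int.toNat_of_nonneg hc0, Nat.cast_one]

/-- `R_{r,s}(K_{1,n₁},…,K_{1,n_r}) ≤ ⌈(n₁ + ⋯ + n_r − r + 1)/s⌉ + 1` for
`r > s ≥ 1` and `3 ≤ n₁ ≤ … ≤ n_r`. Here `K_{1,m}` is realized as the
complete bipartite graph with parts `Unit` and `Fin m`. -/
theorem setRamsey_stars_upper (r s : ℕ) (hs : 0 < s) (hrs : s < r)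
    (n : Fin r → ℕ) (hn : ∀ i, 3 ≤ n i) (hmono : Monotone n) :
    (setRamsey s (fun i => completeBipartiteGraph Unit (Fin (n i))) : ℤ)
      ≤ ⌈((∑ i, (n i : ℚ)) - r + 1) / s⌉ + 1 :=
  setRamsey_stars_upper_general r s hs n hn
end

section
/- For all positive integers r > s and k ≥ 3, the set-coloring Ramsey number of the complete graph satisfies R_{r,s}(K_k) > ⌊ (k/e) · r^{−1/k} · (r/s)^{(k−1)/2} ⌋. -/
/-!
Picking one color out of every color set reduces set-colorings to ordinary `r`-colorings, so
the multicolor Ramsey theorem (proved by the greedy argument in which the color of an edge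
depends only on its earlier endpoint) shows that `setRamsey` is the least `N` with the Ramsey
property rather than the junk value `sInf ∅ = 0`.

For the lower bound, color every edge of `K_N` by an independent uniformly random `s`-subset of
`Fin r`. A fixed `k`-set is monochromatic in a fixed color `i` with probability
`(s/r)^(k choose 2)`, so some coloring has no monochromatic `K_k` as soon as
`r · (N choose k) · (s/r)^(k choose 2) < 1`. With `N choose k < (eN/k)^k` this holds whenever
`N ≤ (k/e) r^(-1/k) (r/s)^((k-1)/2)`.
-/

open SimpleGraph Finset

section MulticolorRamsey

variable {α β : Type*} [DecidableEq α] [Fintype β] [Nonempty β] (c : Sym2 α → β)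

theorem exists_injective_seq_color_eq :
    ∀ (t : ℕ) (V : Finset α), (Fintype.card β + 1) ^ t ≤ #V →
      ∃ (g : Fin t → α) (col : Fin t → β), (∀ i, g i ∈ V) ∧ Function.Injective g ∧
        ∀ i j, i < j → c s(g i, g j) = col i := by
  classical
  intro t
  induction t with
  | zero => exact fun _ _ => ⟨Fin.elim0, Fin.elim0, fun i => i.elim0,
      Function.injective_of_subsingleton _, fun i => i.elim0⟩
  | succ t ih =>
    intro V hV
    obtain ⟨v, hv⟩ : V.Nonempty := card_pos.mp (lt_of_lt_of_le (by positivity) hV)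
    obtain ⟨b, -, hb⟩ := exists_le_card_fiber_of_mul_le_card_of_maps_to
      (s := V.erase v) (f := fun u => c s(v, u)) (fun _ _ => mem_univ _) univ_nonempty
      (n := (Fintype.card β + 1) ^ t) (by
        rw [card_univ, card_erase_of_mem hv]
        rw [pow_succ] at hV
        have : 1 ≤ (Fintype.card β + 1) ^ t := Nat.one_le_pow _ _ (Nat.succ_pos _)
        apply Nat.le_sub_one_of_lt
        nlinarith)
    obtain ⟨g, col, hgW, hg, hcol⟩ := ih _ hb
    have hgV : ∀ i, g i ∈ V.erase v ∧ c s(v, g i) = b := fun i => mem_filter.mp (hgW i)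
    refine ⟨Fin.cons v g, Fin.cons b col, Fin.cases hv fun i => mem_of_mem_erase (hgV i).1,
      Fin.cons_injective_iff.mpr ⟨?_, hg⟩, ?_⟩
    · rintro ⟨i, hi⟩
      exact ne_of_mem_erase (hgV i).1 hi
    · intro i j hij
      induction j using Fin.cases with
      | zero => exact absurd hij (Fin.not_lt_zero i)
      | succ j =>
        induction i using Fin.cases with
        | zero => exact (hgV j).2
        | succ i => exact hcol i j (Fin.succ_lt_succ_iff.mp hij)

theorem exists_injective_color_eq (k : ℕ) (V : Finset α)
    (hV : (Fintype.card β + 1) ^ (Fintype.card β * (k - 1) + 1) ≤ #V) :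
    ∃ (f : Fin k → α) (b : β),
      Function.Injective f ∧ ∀ u v, u ≠ v → c s(f u, f v) = b := by
  classical
  obtain ⟨g, col, -, hg, hcol⟩ := exists_injective_seq_color_eq c _ V hV
  obtain ⟨b, hb⟩ := Fintype.exists_lt_card_fiber_of_mul_lt_card col (n := k - 1)
    (by rw [Fintype.card_fin]; omega)
  obtain ⟨F, hFb, hF⟩ := exists_subset_card_eq (show k ≤ #{j | col j = b} by omega)
  let h := F.orderEmbOfFin hF
  have hcol_h : ∀ u v, u < v → c s(g (h u), g (h v)) = b := fun u v huv =>
    (hcol _ _ (h.strictMono huv)).trans (mem_filter.mp (hFb (F.orderEmbOfFin_mem hF u))).2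
  refine ⟨g ∘ h, b, hg.comp h.injective, fun u v huv => ?_⟩
  rcases huv.lt_or_gt with huv | huv
  · exact hcol_h u v huv
  · exact Sym2.eq_swap ▸ hcol_h v u huv

end MulticolorRamsey

section SetRamsey

variable {r s : ℕ} {V : Fin r → Type} {G : ∀ i, SimpleGraph (V i)}

theorem SetRamseyProp.mono {M N : ℕ} (h : SetRamseyProp s G M) (hMN : M ≤ N) :
    SetRamseyProp s G N := by
  intro χ hχ
  let ι := Fin.castLE hMN
  obtain ⟨i, f, hf, hmono⟩ := h (fun e => χ (e.map ι)) fun e he =>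
    hχ _ ((Sym2.isDiag_map (Fin.castLE_injective hMN)).not.mpr he)
  exact ⟨i, ι ∘ f, (Fin.castLE_injective hMN).comp hf, hmono⟩

theorem lt_setRamsey {N : ℕ} (hG : ∃ M, SetRamseyProp s G M) (hN : ¬ SetRamseyProp s G N) :
    N < setRamsey s G := by
  by_contra! h
  exact hN (SetRamseyProp.mono (Nat.sInf_mem hG) h)

end SetRamsey

theorem setRamseyProp_top {r s : ℕ} (hr : 0 < r) (hs : 0 < s) (k : ℕ) :
    SetRamseyProp s (fun _ : Fin r => (⊤ : SimpleGraph (Fin k)))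
      ((r + 1) ^ (r * (k - 1) + 1)) := by
  intro χ hχ
  have : Nonempty (Fin r) := ⟨⟨0, hr⟩⟩
  let c e := if h : (χ e).Nonempty then (χ e).min' h else ⟨0, hr⟩
  obtain ⟨f, i, hf, hfc⟩ := exists_injective_color_eq c k univ (by simp)
  refine ⟨i, f, hf, fun u v huv => ?_⟩
  have hne : (χ s(f u, f v)).Nonempty := by
    rw [← card_pos, hχ _ (Sym2.mk_isDiag_iff.not.mpr (hf.ne huv))]
    exact hs
  rw [← hfc u v huv]
  simp only [c, dif_pos hne]
  exact min'_mem _ _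

theorem card_piFinset_ite_mul {ι κ : Type*} [Fintype ι] [DecidableEq ι] (S : Finset ι)
    (P C : Finset κ) :
    #(Fintype.piFinset fun e => if e ∈ S then P else C) * #C ^ #S =
      #P ^ #S * #C ^ Fintype.card ι := by
  simp only [Fintype.card_piFinset, apply_ite card]
  rw [prod_ite, prod_const, prod_const, filter_univ_mem, filter_not, filter_univ_mem,
    ← compl_eq_univ_sdiff, card_compl, mul_assoc, ← pow_add,
    Nat.sub_add_cancel (card_le_univ S)]

theorem card_filter_mem_powersetCard {γ : Type*} [DecidableEq γ] {t : Finset γ} {a : γ}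
    (ha : a ∈ t) {n : ℕ} (hn : 0 < n) :
    #{A ∈ t.powersetCard n | a ∈ A} = (#t - 1).choose (n - 1) := by
  simpa only [singleton_subset_iff, card_singleton] using
    card_filter_powersetCard_subset {a} t n (singleton_subset_iff.mpr ha) hn

section SetColorings

variable {α : Type*} [Fintype α] [DecidableEq α] {r : ℕ}

variable (α r) in
/-- Unlike in `SetRamseyProp`, the diagonal elements of `Sym2 α` get color sets as well. -/
def setColorings (s : ℕ) : Finset (Sym2 α → Finset (Fin r)) :=
  Fintype.piFinset fun _ => powersetCard s univ

def monoColorings (s : ℕ) (i : Fin r) (T : Finset α) : Finset (Sym2 α → Finset (Fin r)) :=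
  Fintype.piFinset fun e =>
    if e ∈ T.offDiag.image Sym2.mk.uncurry then
      {A ∈ powersetCard s (univ : Finset (Fin r)) | i ∈ A}
    else powersetCard s univ

theorem card_setColorings (s : ℕ) :
    #(setColorings α r s) = r.choose s ^ Fintype.card (Sym2 α) := by
  rw [setColorings, Fintype.card_piFinset, prod_const, card_powersetCard, card_univ, card_univ,
    Fintype.card_fin]

theorem card_monoColorings_mul {s : ℕ} (hs : 0 < s) (i : Fin r) (T : Finset α) :
    #(monoColorings s i T) * r.choose s ^ (#T).choose 2 =
      (r - 1).choose (s - 1) ^ (#T).choose 2 * r.choose s ^ Fintype.card (Sym2 α) := by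
  have h := card_piFinset_ite_mul (T.offDiag.image Sym2.mk.uncurry)
    {A ∈ powersetCard s (univ : Finset (Fin r)) | i ∈ A} (powersetCard s univ)
  rwa [Sym2.card_image_offDiag, card_filter_mem_powersetCard (mem_univ i) hs, card_powersetCard,
    card_univ, Fintype.card_fin] at h

theorem card_biUnion_monoColorings_lt {s k : ℕ} (hs : 0 < s) (hsr : s ≤ r)
    (h : r * (Fintype.card α).choose k * s ^ k.choose 2 < r ^ k.choose 2) :
    #((univ ×ˢ powersetCard k univ).biUnion fun p : Fin r × Finset α => monoColorings s p.1 p.2)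
      < #(setColorings α r s) := by
  set m := k.choose 2
  set c₀ := r.choose s
  set c₁ := (r - 1).choose (s - 1)
  set E := Fintype.card (Sym2 α)
  have hc₀ : 0 < c₀ := Nat.choose_pos hsr
  have hunion : #((univ ×ˢ powersetCard k univ).biUnion
      fun p : Fin r × Finset α => monoColorings s p.1 p.2) * c₀ ^ m ≤
        r * (Fintype.card α).choose k * (c₁ ^ m * c₀ ^ E) := by
    calc _ ≤ (∑ p ∈ univ ×ˢ powersetCard k univ, #(monoColorings s p.1 p.2)) * c₀ ^ m :=
          Nat.mul_le_mul_right _ card_biUnion_le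
      _ = ∑ p ∈ univ ×ˢ powersetCard k (univ : Finset α), c₁ ^ m * c₀ ^ E := by
          rw [sum_mul]
          refine sum_congr rfl fun p hp => ?_
          have h := card_monoColorings_mul hs p.1 p.2
          rwa [(mem_powersetCard.mp (mem_product.mp hp).2).2] at h
      _ = _ := by simp [card_powersetCard, mul_assoc]
  -- `c₁ / c₀ = s / r` is the probability that a random `s`-set contains a given color
  have hrc : r * c₁ = s * c₀ := by
    obtain ⟨r, rfl⟩ := Nat.exists_eq_add_one_of_ne_zero (by omega : r ≠ 0)
    obtain ⟨s, rfl⟩ := Nat.exists_eq_add_one_of_ne_zero hs.ne'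
    simpa [c₀, c₁, mul_comm] using Nat.add_one_mul_choose_eq r s
  rw [card_setColorings]
  refine Nat.lt_of_mul_lt_mul_right (a := c₀ ^ m * r ^ m) ?_
  calc #_ * (c₀ ^ m * r ^ m)
        ≤ r * (Fintype.card α).choose k * (c₁ ^ m * c₀ ^ E) * r ^ m := by
          rw [← mul_assoc]; exact Nat.mul_le_mul_right _ hunion
    _ = r * (Fintype.card α).choose k * (r * c₁) ^ m * c₀ ^ E := by ring
    _ = r * (Fintype.card α).choose k * s ^ m * (c₀ ^ m * c₀ ^ E) := by rw [hrc]; ring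
    _ < r ^ m * (c₀ ^ m * c₀ ^ E) := Nat.mul_lt_mul_of_pos_right h (by positivity)
    _ = c₀ ^ E * (c₀ ^ m * r ^ m) := by ring

end SetColorings

theorem mem_monoColorings_of_monoCopy {N r s k : ℕ} {ω : Sym2 (Fin N) → Finset (Fin r)}
    (hω : ω ∈ setColorings (Fin N) r s) {i : Fin r} {f : Fin k → Fin N}
    (hf : Function.Injective f)
    (hmono : ∀ u v, (⊤ : SimpleGraph (Fin k)).Adj u v → i ∈ ω s(f u, f v)) :
    ω ∈ monoColorings s i (univ.map ⟨f, hf⟩) := by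
  refine Fintype.mem_piFinset.mpr fun e => ?_
  have hωe := Fintype.mem_piFinset.mp hω e
  split_ifs with he
  · obtain ⟨⟨a, b⟩, hab, rfl⟩ := mem_image.mp he
    obtain ⟨⟨u, -, rfl⟩, ⟨v, -, rfl⟩, huv⟩ := by simpa using hab
    exact mem_filter.mpr ⟨hωe, hmono u v (by simpa [hf.eq_iff] using huv)⟩
  · exact hωe

theorem not_setRamseyProp_top_of_lt {N r s k : ℕ} (hs : 0 < s) (hsr : s ≤ r)
    (h : r * N.choose k * s ^ k.choose 2 < r ^ k.choose 2) :
    ¬ SetRamseyProp s (fun _ : Fin r => (⊤ : SimpleGraph (Fin k))) N := by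
  intro hR
  obtain ⟨ω, hω, hωU⟩ := exists_mem_notMem_of_card_lt_card
    (card_biUnion_monoColorings_lt (α := Fin N) (k := k) hs hsr (by simpa using h))
  obtain ⟨i, f, hf, hmono⟩ :=
    hR ω fun e _ => (mem_powersetCard.mp (Fintype.mem_piFinset.mp hω e)).2
  refine hωU (mem_biUnion.mpr
    ⟨(i, univ.map ⟨f, hf⟩), ?_, mem_monoColorings_of_monoCopy hω hf hmono⟩)
  simp [card_map]

open Real in
theorem choose_lt_exp_mul_div_pow {N k : ℕ} (hN : N ≠ 0) (hk : 2 ≤ k) :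
    (N.choose k : ℝ) < (exp 1 * N / k) ^ k := by
  have hk₀ : (0 : ℝ) < k := by positivity
  have hfact : ((k : ℝ) / exp 1) ^ k ≤ k.factorial := by
    have h := pow_div_factorial_le_exp _ hk₀.le k
    rw [← exp_one_pow, div_le_iff₀ (by positivity)] at h
    rwa [div_pow, div_le_iff₀ (by positivity), mul_comm]
  calc (N.choose k : ℝ) < N ^ k / k.factorial := Nat.choose_lt_pow_div hN hk
    _ ≤ N ^ k / ((k : ℝ) / exp 1) ^ k := by gcongr
    _ = (exp 1 * N / k) ^ k := by rw [← div_pow]; congr 1; field_simp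

open Real in
theorem rpow_neg_one_div_mul_rpow_pow {r s : ℝ} (hr : 0 < r) (hs : 0 < s) {k : ℕ}
    (hk : k ≠ 0) :
    (r ^ (-(1 : ℝ) / k) * (r / s) ^ (((k : ℝ) - 1) / 2)) ^ k = (r / s) ^ k.choose 2 / r := by
  have hk' : (k : ℝ) ≠ 0 := by exact_mod_cast hk
  rw [mul_pow, ← rpow_natCast, ← rpow_natCast, ← rpow_mul hr.le, ← rpow_mul (by positivity),
    ← rpow_natCast (r / s), Nat.cast_choose_two, div_mul_cancel₀ _ hk', rpow_neg_one,
    mul_comm, div_eq_mul_inv _ r]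
  ring_nf

open Real in
theorem mul_choose_mul_pow_lt {r s k N : ℕ} (hs : 0 < s) (hr : 0 < r) (hk : 2 ≤ k)
    (hN : (N : ℝ) ≤ ((k : ℝ) / exp 1) * (r : ℝ) ^ (-(1 : ℝ) / (k : ℝ)) *
        ((r : ℝ) / (s : ℝ)) ^ (((k : ℝ) - 1) / 2)) :
    r * N.choose k * s ^ k.choose 2 < r ^ k.choose 2 := by
  rcases Nat.eq_zero_or_pos N with rfl | hN₀
  · simp [Nat.choose_eq_zero_of_lt (by omega : 0 < k), hr]
  have hr' : (0 : ℝ) < r := by exact_mod_cast hr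
  have hs' : (0 : ℝ) < s := by exact_mod_cast hs
  have hbase : exp 1 * N / k ≤ (r : ℝ) ^ (-(1 : ℝ) / (k : ℝ)) *
      ((r : ℝ) / (s : ℝ)) ^ (((k : ℝ) - 1) / 2) := by
    rw [div_le_iff₀ (by positivity)]
    calc exp 1 * N ≤ exp 1 * (((k : ℝ) / exp 1) * (r : ℝ) ^ (-(1 : ℝ) / (k : ℝ)) *
        ((r : ℝ) / (s : ℝ)) ^ (((k : ℝ) - 1) / 2)) := by gcongr
      _ = _ := by field_simp
  have hchoose : (N.choose k : ℝ) < (r / s) ^ k.choose 2 / r :=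
    calc (N.choose k : ℝ) < (exp 1 * N / k) ^ k := choose_lt_exp_mul_div_pow hN₀.ne' hk
      _ ≤ _ := by gcongr
      _ = _ := rpow_neg_one_div_mul_rpow_pow hr' hs' (by omega)
  have : (r : ℝ) * N.choose k * s ^ k.choose 2 < r ^ k.choose 2 :=
    calc (r : ℝ) * N.choose k * s ^ k.choose 2
          < r * ((r / s) ^ k.choose 2 / r) * s ^ k.choose 2 := by gcongr
      _ = r ^ k.choose 2 := by rw [div_pow]; field_simp
  exact_mod_cast this

/-- For `r > s ≥ 1` and `k ≥ 3`,
`R_{r,s}(K_k) > ⌊(k/e)·r^{−1/k}·(r/s)^{(k−1)/2}⌋`. -/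
theorem setRamsey_clique_lower (r s k : ℕ) (hs : 0 < s) (hrs : s < r)
    (hk : 3 ≤ k) :
    ⌊((k : ℝ) / Real.exp 1) * (r : ℝ) ^ (-(1 : ℝ) / (k : ℝ)) *
        ((r : ℝ) / (s : ℝ)) ^ (((k : ℝ) - 1) / 2)⌋
      < (setRamsey s (fun _ : Fin r => (⊤ : SimpleGraph (Fin k))) : ℤ) := by
  have hr : 0 < r := hs.trans hrs
  have hx : 0 ≤ ((k : ℝ) / Real.exp 1) * (r : ℝ) ^ (-(1 : ℝ) / (k : ℝ)) *
      ((r : ℝ) / (s : ℝ)) ^ (((k : ℝ) - 1) / 2) := by positivity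
  rw [← Int.natCast_floor_eq_floor hx, Nat.cast_lt]
  exact lt_setRamsey ⟨_, setRamseyProp_top hr hs k⟩ <|
    not_setRamseyProp_top_of_lt hs hrs.le <|
      mul_choose_mul_pow_lt hs hr (by omega) (Nat.floor_le hx)
end

section
/- Let r, s, n_1 be positive integers with r > s and n_1 ≥ 3, let 0 ≤ p ≤ s−1 satisfy s·M = r·n_1 − r − p where M = ⌊(r·n_1 − r)/s⌋, and suppose M ≤ C(r,s). Then there exists a multiset C_1,…,C_M of s-element subsets of {1,…,r} such that each element i with 1 ≤ i ≤ r−p belongs to exactly n_1 − 1 of the sets C_j, and each element i with r−p+1 ≤ i ≤ r belongs to exactly n_1 − 2 of the sets C_j. -/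
open Finset

private lemma degree_count (r s M : ℕ) (hr : 0 < r) (hs : 0 < s) (hsr : s < r)
    (i : Fin r) (c : ℕ)
    (h1 : ∀ m, m < c → (i : ℕ) + m * r < M * s)
    (h2 : ∀ m, (i : ℕ) + m * r < M * s → m < c) :
    (univ.filter (fun j : Fin M =>
      i ∈ (range s).image (fun t => (⟨((j : ℕ) * s + t) % r, Nat.mod_lt _ hr⟩ : Fin r)))).card
      = c := by
  have key : ∀ j : Fin M,
      (i ∈ (range s).image (fun t => (⟨((j : ℕ) * s + t) % r, Nat.mod_lt _ hr⟩ : Fin r)))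
      ↔ ∃ t, t < s ∧ ((j : ℕ) * s + t) % r = (i : ℕ) := by
    intro j
    simp [Finset.mem_image, Fin.ext_iff]
  rw [← Finset.card_range c]
  symm
  apply Finset.card_bij (fun m _ => (⟨((i : ℕ) + m * r) / s, by
    rw [Nat.div_lt_iff_lt_mul hs]
    exact h1 m (mem_range.mp ‹m ∈ range c›)⟩ : Fin M))
  · intro m hm
    rw [mem_filter]
    refine ⟨mem_univ _, ?_⟩
    rw [key]
    refine ⟨((i : ℕ) + m * r) % s, Nat.mod_lt _ hs, ?_⟩
    have hdm : ((i : ℕ) + m * r) / s * s + ((i : ℕ) + m * r) % s = (i : ℕ) + m * r :=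
      Nat.div_add_mod' _ _
    rw [hdm, Nat.add_mul_mod_self_right, Nat.mod_eq_of_lt i.isLt]
  · intro m1 hm1 m2 hm2 heq
    have heq' : ((i : ℕ) + m1 * r) / s = ((i : ℕ) + m2 * r) / s := by
      simpa [Fin.ext_iff] using heq
    have e1 : ((i : ℕ) + m1 * r) / s * s + ((i : ℕ) + m1 * r) % s = (i : ℕ) + m1 * r :=
      Nat.div_add_mod' _ _
    have e2 : ((i : ℕ) + m2 * r) / s * s + ((i : ℕ) + m2 * r) % s = (i : ℕ) + m2 * r :=
      Nat.div_add_mod' _ _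
    have l1 : ((i : ℕ) + m1 * r) % s < s := Nat.mod_lt _ hs
    have l2 : ((i : ℕ) + m2 * r) % s < s := Nat.mod_lt _ hs
    have b1 : m1 * r < m2 * r + r := by
      rw [heq'] at e1
      omega
    have b2 : m2 * r < m1 * r + r := by
      rw [heq'] at e1
      omega
    have c1 : m1 < m2 + 1 := by
      have : m1 * r < (m2 + 1) * r := by rw [add_one_mul]; omega
      exact Nat.lt_of_mul_lt_mul_right this
    have c2 : m2 < m1 + 1 := by
      have : m2 * r < (m1 + 1) * r := by rw [add_one_mul]; omega
      exact Nat.lt_of_mul_lt_mul_right this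
    omega
  · intro j hj
    rw [mem_filter, key] at hj
    obtain ⟨_, t, ht, hmod⟩ := hj
    set k := (j : ℕ) * s + t with hk
    have hkr : k % r = (i : ℕ) := hmod
    have hkd : k % r + k / r * r = k := Nat.mod_add_div' k r
    have hki : k = (i : ℕ) + (k / r) * r := by omega
    have hkM : k < M * s := by
      have h1' : ((j : ℕ) + 1) * s ≤ M * s := Nat.mul_le_mul_right s j.isLt
      have h2' : ((j : ℕ) + 1) * s = (j : ℕ) * s + s := by ring
      omega
    refine ⟨k / r, mem_range.mpr (h2 _ (by omega)), ?_⟩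
    apply Fin.ext
    show ((i : ℕ) + k / r * r) / s = (j : ℕ)
    rw [← hki, hk]
    rw [add_comm ((j : ℕ) * s) t, Nat.add_mul_div_right _ _ hs, Nat.div_eq_of_lt ht, Nat.zero_add]

/-- Let `r > s ≥ 1`, `n₁ ≥ 3`, `0 ≤ p ≤ s−1`, `M = ⌊(r·n₁ − r)/s⌋` with
`s·M = r·n₁ − r − p`, and `M ≤ C(r,s)`. Then there is a multiset (indexed
family) `C₁,…,C_M` of `s`-element subsets of `Fin r` such that every element
among the first `r − p` belongs to exactly `n₁ − 1` of the sets, and every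
element among the last `p` belongs to exactly `n₁ − 2` of the sets. -/
theorem exists_star_coloring_family (r s n₁ p M : ℕ) (hs : 0 < s) (hrs : s < r)
    (hn₁ : 3 ≤ n₁) (hp : p ≤ s - 1) (hM : M = (r * n₁ - r) / s)
    (hsp : s * M = r * n₁ - r - p) (hMC : M ≤ r.choose s) :
    ∃ C : Fin M → Finset (Fin r),
      (∀ j, (C j).card = s) ∧
      (∀ i : Fin r, (i : ℕ) < r - p →
        (univ.filter (fun j : Fin M => i ∈ C j)).card = n₁ - 1) ∧
      (∀ i : Fin r, r - p ≤ (i : ℕ) →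
        (univ.filter (fun j : Fin M => i ∈ C j)).card = n₁ - 2) := by
  have hr : 0 < r := hs.trans hrs
  obtain ⟨n, rfl⟩ : ∃ n, n₁ = n + 3 := ⟨n₁ - 3, by omega⟩
  have hpr : p < r := by omega
  have hN : M * s = r * (n + 2) - p := by
    rw [Nat.mul_comm]
    have h : r * (n + 3) = r * (n + 2) + r := by ring
    omega
  refine ⟨fun j => (range s).image (fun t => (⟨((j : ℕ) * s + t) % r, Nat.mod_lt _ hr⟩ : Fin r)),
    ?_, ?_, ?_⟩
  · intro j
    rw [Finset.card_image_of_injOn, card_range]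
    intro t1 ht1 t2 ht2 h
    rw [mem_coe, mem_range] at ht1 ht2
    have h' : ((j : ℕ) * s + t1) % r = ((j : ℕ) * s + t2) % r := by
      simpa [Fin.ext_iff] using h
    have hmod : t1 ≡ t2 [MOD r] := Nat.ModEq.add_left_cancel' ((j : ℕ) * s) h'
    have := hmod
    unfold Nat.ModEq at this
    rw [Nat.mod_eq_of_lt (by omega), Nat.mod_eq_of_lt (by omega)] at this
    exact this
  · intro i hi
    have hcard := degree_count r s M hr hs hrs i (n + 2) ?_ ?_
    · simpa using hcard
    · intro m hm
      have h1' : m * r ≤ (n + 1) * r := Nat.mul_le_mul_right r (by omega)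
      have h2' : r * (n + 2) = (n + 1) * r + r := by ring
      omega
    · intro m hm
      by_contra hc
      have h1' : (n + 2) * r ≤ m * r := Nat.mul_le_mul_right r (by omega)
      have h2' : r * (n + 2) = (n + 2) * r := by ring
      omega
  · intro i hi
    have hcard := degree_count r s M hr hs hrs i (n + 1) ?_ ?_
    · simpa using hcard
    · intro m hm
      have h1' : m * r ≤ n * r := Nat.mul_le_mul_right r (by omega)
      have h2' : r * (n + 2) = n * r + r + r := by ring
      have := i.isLt
      omega
    · intro m hm
      by_contra hc
      have h1' : (n + 1) * r ≤ m * r := Nat.mul_le_mul_right r (by omega)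
      have h2' : r * (n + 2) = (n + 1) * r + r := by ring
      omega
end
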